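/- If T is a tree with at least 2 vertices, then pc(T) + 1 ≤ F_t(T) ≤ 2 pc(T). -/

import Mathlib

/-- The forcing process: vertices that eventually get colored starting from `S`.
A colored vertex with exactly one uncolored neighbor forces that neighbor. -/
inductive SimpleGraph.Forced {V : Type*} (G : SimpleGraph V) (S : Set V) : V → Prop
  | init (v : V) (hv : v ∈ S) : SimpleGraph.Forced G S v
  | force (u w : V) (hu : SimpleGraph.Forced G S u) (hadj : G.Adj u w)
      (huniq : ∀ x, G.Adj u x → x ≠ w → SimpleGraph.Forced G S x) :
      SimpleGraph.Forced G S w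

/-- `S` is a zero forcing set if the forcing process colors every vertex. -/
def SimpleGraph.IsZeroForcingSet {V : Type*} (G : SimpleGraph V) (S : Set V) : Prop :=
  ∀ v, G.Forced S v

/-- The zero forcing number `Z(G)`. -/
noncomputable def SimpleGraph.zeroForcingNumber {V : Type*} (G : SimpleGraph V) : ℕ :=
  sInf {n | ∃ S : Set V, G.IsZeroForcingSet S ∧ S.ncard = n}

/-- A total forcing set: a zero forcing set inducing a subgraph without isolated vertices. -/
def SimpleGraph.IsTotalForcingSet {V : Type*} (G : SimpleGraph V) (S : Set V) : Prop :=
  G.IsZeroForcingSet S ∧ ∀ v ∈ S, ∃ u ∈ S, G.Adj v u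

/-- The total forcing number `F_t(G)`. -/
noncomputable def SimpleGraph.totalForcingNumber {V : Type*} (G : SimpleGraph V) : ℕ :=
  sInf {n | ∃ S : Set V, G.IsTotalForcingSet S ∧ S.ncard = n}

/-- A set of vertices that is the vertex set of a path (as a subgraph) of `G`. -/
def SimpleGraph.IsPathSet {V : Type*} (G : SimpleGraph V) (P : Set V) : Prop :=
  ∃ (u v : V) (w : G.Walk u v), w.IsPath ∧ {x | x ∈ w.support} = P

/-- A path cover: a collection of vertex-disjoint paths partitioning the vertex set. -/
def SimpleGraph.IsPathCover {V : Type*} (G : SimpleGraph V) (P : Set (Set V)) : Prop :=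
  (∀ Q ∈ P, G.IsPathSet Q) ∧ P.PairwiseDisjoint id ∧ ⋃₀ P = Set.univ

/-- The path cover number `pc(G)`. -/
noncomputable def SimpleGraph.pathCoverNumber {V : Type*} (G : SimpleGraph V) : ℕ :=
  sInf {n | ∃ P : Set (Set V), G.IsPathCover P ∧ P.ncard = n}

/-- The matching number `α'(G)`. -/
noncomputable def SimpleGraph.matchingNumber {V : Type*} (G : SimpleGraph V) : ℕ :=
  sSup {n | ∃ M : G.Subgraph, M.IsMatching ∧ M.edgeSet.ncard = n}

/-- A leaf is a vertex with exactly one neighbor. -/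
def SimpleGraph.IsLeaf {V : Type*} (G : SimpleGraph V) (v : V) : Prop :=
  (G.neighborSet v).ncard = 1

/-!
Lower bound. Whenever a vertex `u` forces `w`, every neighbour of `u` other than `w` is already
coloured, so `u` cannot force again: recording who forced whom splits the vertices into
forcing chains, paths starting at the vertices of the forcing set `S`. In a total forcing set two
vertices of `S` are adjacent, and the two chains starting there join into a single path, so
`pc ≤ |S| - 1`.

Upper bound. In a forest the starting vertices of the paths of any path cover form a zero forcing
set. Otherwise let `U` be the vertices that never get coloured and `X` the set of vertices in or
next to `U`. A vertex of `U` is entered by an edge of its path; a coloured vertex of `X` has at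
least two neighbours in `U` (or it would force), so at least one of them is not its successor on
its path. This yields `|X|` distinct edges inside `X`, too many for a forest. Adding one neighbour
of every starting vertex gives a total forcing set of size at most `2 pc`.
-/

lemma Set.PairwiseDisjoint.update_insert {ι α : Type*} [DecidableEq ι] {S : Set ι}
    {f : ι → Set α} (hf : S.PairwiseDisjoint f) {s : ι} (hs : s ∈ S) {w : α}
    (hw : ∀ t ∈ S, w ∉ f t) :
    S.PairwiseDisjoint (Function.update f s (insert w (f s))) := by
  intro t₁ ht₁ t₂ ht₂ hne
  have key : ∀ t ∈ S, t ≠ s → Disjoint (insert w (f s)) (f t) := fun t ht hts =>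
    Set.disjoint_insert_left.mpr ⟨hw t ht, hf hs ht (Ne.symm hts)⟩
  by_cases h₁ : t₁ = s <;> by_cases h₂ : t₂ = s <;> subst_vars
  · exact absurd rfl hne
  · simpa [Function.onFun, Function.update_of_ne h₂] using key t₂ ht₂ h₂
  · simpa [Function.onFun, Function.update_of_ne h₁] using (key t₁ ht₁ h₁).symm
  · simpa [Function.onFun, Function.update_of_ne h₁, Function.update_of_ne h₂] using
      hf ht₁ ht₂ hne

lemma Set.biUnion_update_insert {ι α : Type*} [DecidableEq ι] {S : Set ι} (f : ι → Set α) {s : ι}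
    (hs : s ∈ S) (w : α) :
    ⋃ t ∈ S, Function.update f s (insert w (f s)) t = insert w (⋃ t ∈ S, f t) := by
  ext x
  simp only [Set.mem_iUnion, Set.mem_insert_iff, Function.update_apply, exists_prop]
  grind

namespace SimpleGraph

variable {V : Type*} {G : SimpleGraph V}

lemma IsPathCover.pathCoverNumber_le {P : Set (Set V)} (hP : G.IsPathCover P) :
    G.pathCoverNumber ≤ P.ncard :=
  Nat.sInf_le ⟨P, hP, rfl⟩

lemma IsTotalForcingSet.totalForcingNumber_le {S : Set V} (hS : G.IsTotalForcingSet S) :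
    G.totalForcingNumber ≤ S.ncard :=
  Nat.sInf_le ⟨S, hS, rfl⟩

lemma Forced.mono {S S' : Set V} (h : S ⊆ S') {v : V} (hv : G.Forced S v) : G.Forced S' v := by
  induction hv with
  | init v hv => exact .init v (h hv)
  | force u w _ hadj _ ihu ihuniq => exact .force u w ihu hadj ihuniq

lemma IsZeroForcingSet.mono {S S' : Set V} (hS : G.IsZeroForcingSet S) (h : S ⊆ S') :
    G.IsZeroForcingSet S' :=
  fun v => (hS v).mono h

lemma Forced.mem_of_closed {S C : Set V} (hSC : S ⊆ C)
    (hC : ∀ u ∈ C, ∀ w, G.Adj u w → (∀ x, G.Adj u x → x ≠ w → x ∈ C) → w ∈ C) {v : V}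
    (hv : G.Forced S v) : v ∈ C := by
  induction hv with
  | init v hv => exact hSC hv
  | force u w _ hadj _ ihu ihuniq => exact hC u ihu w hadj ihuniq

lemma Forced.exists_unforced_adj_ne {S : Set V} {u w : V} (hu : G.Forced S u) (hadj : G.Adj u w)
    (hw : ¬ G.Forced S w) : ∃ x, ¬ G.Forced S x ∧ x ≠ w ∧ G.Adj u x := by
  by_contra! h
  exact hw (.force u w hu hadj fun x hx hxw => by_contra fun hx' => h x hx' hxw hx)

lemma Forced.nonempty {S : Set V} {v : V} (hv : G.Forced S v) : S.Nonempty := by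
  induction hv with
  | init v hv => exact ⟨v, hv⟩
  | force _ _ _ _ _ ihu => exact ihu

def IsPathSetFrom (G : SimpleGraph V) (s : V) (Q : Set V) : Prop :=
  ∃ (e : V) (p : G.Walk s e), p.IsPath ∧ {x | x ∈ p.support} = Q

/-- The forcing chains once the vertices of `C` are coloured: the chain of `s ∈ S` is a path
from `s` with vertex set `f s`, and only its last vertex may still have uncoloured neighbours. -/
def IsChainFamily (G : SimpleGraph V) (S C : Set V) (f : V → Set V) : Prop :=
  (∀ s ∈ S, ∃ (e : V) (p : G.Walk s e), p.IsPath ∧ {x | x ∈ p.support} = f s ∧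
      ∀ x ∈ p.support, x ≠ e → G.neighborSet x ⊆ C) ∧
    S.PairwiseDisjoint f ∧ ⋃ s ∈ S, f s = C

lemma isChainFamily_singleton (G : SimpleGraph V) (S : Set V) :
    G.IsChainFamily S S (fun s => {s}) := by
  refine ⟨fun s _ => ⟨s, .nil, .nil, by simp, by simp⟩, ?_, by simp⟩
  intro s _ t _ hst
  simpa [Function.onFun] using hst

lemma IsChainFamily.exists_insert {S C : Set V} {f : V → Set V} (hf : G.IsChainFamily S C f)
    {u w : V} (hu : u ∈ C) (hw : w ∉ C) (huw : G.Adj u w)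
    (hC : ∀ x, G.Adj u x → x ≠ w → x ∈ C) :
    ∃ f', G.IsChainFamily S (insert w C) f' := by
  classical
  obtain ⟨hpaths, hdisj, hcover⟩ := hf
  obtain ⟨s, hs, hus⟩ : ∃ s ∈ S, u ∈ f s := by simpa [← hcover] using hu
  obtain ⟨e, p, hp, hpf, hsat⟩ := hpaths s hs
  -- `u` has the uncoloured neighbour `w`, so it is the end of its chain
  obtain rfl : u = e := by
    by_contra hne
    rw [← hpf] at hus
    exact hw (hsat u hus hne huw)
  have hwf : ∀ t ∈ S, w ∉ f t := fun t ht h => hw (hcover ▸ Set.mem_biUnion ht h)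
  refine ⟨Function.update f s (insert w (f s)), fun t ht => ?_,
    hdisj.update_insert hs hwf, by rw [Set.biUnion_update_insert f hs, hcover]⟩
  by_cases hts : t = s
  · rw [hts, Function.update_self]
    have hwp : w ∉ p.support := fun h => hwf s hs (by rw [← hpf]; exact h)
    refine ⟨w, p.concat huw, hp.concat hwp huw, ?_, fun x hx hxw => ?_⟩
    · ext x
      simp [Walk.support_concat, ← hpf, or_comm]
    · rw [Walk.support_concat, List.mem_append, List.mem_singleton, or_iff_left hxw] at hx
      by_cases hxu : x = u
      · exact hxu ▸ fun y hy => (eq_or_ne y w).elim (fun h => h ▸ Set.mem_insert _ _)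
          fun h => Set.mem_insert_of_mem _ (hC y hy h)
      · exact (hsat x hx hxu).trans (Set.subset_insert _ _)
  · obtain ⟨e', p', hp', hpf', hsat'⟩ := hpaths t ht
    refine ⟨e', p', hp', by rw [Function.update_of_ne hts, hpf'], fun x hx hxe => ?_⟩
    exact (hsat' x hx hxe).trans (Set.subset_insert _ _)

lemma IsChainFamily.exists_univ [Finite V] {S C : Set V} {f : V → Set V}
    (hS : G.IsZeroForcingSet S) (hf : G.IsChainFamily S C f) :
    ∃ f', G.IsChainFamily S Set.univ f' := by
  by_cases hC : ∃ u ∈ C, ∃ w ∉ C, G.Adj u w ∧ ∀ x, G.Adj u x → x ≠ w → x ∈ C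
  · obtain ⟨u, hu, w, hw, huw, hx⟩ := hC
    obtain ⟨f', hf'⟩ := hf.exists_insert hu hw huw hx
    have : (insert w C)ᶜ.ncard < Cᶜ.ncard :=
      Set.ncard_lt_ncard (compl_lt_compl_iff_lt.mpr (Set.ssubset_insert hw)) (Set.toFinite _)
    exact hf'.exists_univ hS
  · have hSC : S ⊆ C := fun s hs => by
      obtain ⟨e, p, -, hpf, -⟩ := hf.1 s hs
      rw [← hf.2.2]
      exact Set.mem_biUnion hs (hpf ▸ p.start_mem_support)
    have hCuniv : C = Set.univ := Set.eq_univ_of_forall fun v =>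
      (hS v).mem_of_closed hSC fun u hu w huw hx => by_contra fun hw => hC ⟨u, hu, w, hw, huw, hx⟩
    exact ⟨f, hCuniv ▸ hf⟩
termination_by Cᶜ.ncard

def IsRootedPathCover (G : SimpleGraph V) (S : Set V) (f : V → Set V) : Prop :=
  (∀ s ∈ S, G.IsPathSetFrom s (f s)) ∧ S.PairwiseDisjoint f ∧ ⋃ s ∈ S, f s = Set.univ

theorem IsZeroForcingSet.exists_isRootedPathCover [Finite V] {S : Set V}
    (hS : G.IsZeroForcingSet S) : ∃ f, G.IsRootedPathCover S f := by
  obtain ⟨f, hpaths, hdisj, hcover⟩ := (isChainFamily_singleton G S).exists_univ hS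
  refine ⟨f, fun s hs => ?_, hdisj, hcover⟩
  obtain ⟨e, p, hp, hpf, -⟩ := hpaths s hs
  exact ⟨e, p, hp, hpf⟩

lemma IsPathSetFrom.isPathSet_union {a b : V} {A B : Set V} (ha : G.IsPathSetFrom a A)
    (hb : G.IsPathSetFrom b B) (hAB : Disjoint A B) (hab : G.Adj a b) : G.IsPathSet (A ∪ B) := by
  obtain ⟨ea, pa, hpa, rfl⟩ := ha
  obtain ⟨eb, pb, hpb, rfl⟩ := hb
  refine ⟨ea, eb, pa.reverse.append (.cons hab pb), ?_, ?_⟩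
  · rw [Walk.isPath_def, Walk.support_append, Walk.support_reverse, Walk.support_cons,
      List.tail_cons, List.nodup_append]
    exact ⟨List.nodup_reverse.mpr hpa.support_nodup, hpb.support_nodup,
      fun x hx y hy hxy => Set.disjoint_left.mp hAB (List.mem_reverse.mp hx) (hxy ▸ hy)⟩
  · ext x
    have := pa.start_mem_support
    simp only [Walk.mem_support_append_iff, Walk.support_reverse, List.mem_reverse,
      Walk.support_cons, List.mem_cons, Set.mem_ofPred_eq, Set.mem_union]
    grind

theorem IsRootedPathCover.exists_isPathCover_ncard_lt [Finite V] {S : Set V} {f : V → Set V}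
    (hf : G.IsRootedPathCover S f) {a b : V} (ha : a ∈ S) (hb : b ∈ S) (hab : G.Adj a b) :
    ∃ P, G.IsPathCover P ∧ P.ncard < S.ncard := by
  obtain ⟨hpaths, hdisj, hcover⟩ := hf
  have hab' : a ≠ b := hab.ne
  set S' := S \ {a, b}
  refine ⟨insert (f a ∪ f b) (f '' S'), ⟨?_, ?_, ?_⟩, ?_⟩
  · rintro Q (rfl | ⟨s, hs, rfl⟩)
    · exact (hpaths a ha).isPathSet_union (hpaths b hb) (hdisj ha hb hab') hab
    · obtain ⟨e, p, hp, hpf⟩ := hpaths s hs.1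
      exact ⟨s, e, p, hp, hpf⟩
  · refine Set.PairwiseDisjoint.insert ?_ ?_
    · rintro _ ⟨s, hs, rfl⟩ _ ⟨t, ht, rfl⟩ hne
      exact hdisj hs.1 ht.1 fun h => hne (h ▸ rfl)
    · rintro _ ⟨s, hs, rfl⟩ -
      have : s ≠ a ∧ s ≠ b := by simpa [S', not_or] using hs.2
      exact Disjoint.union_left (hdisj ha hs.1 this.1.symm) (hdisj hb hs.1 this.2.symm)
  · refine Set.eq_univ_of_forall fun x => ?_
    obtain ⟨s, hs, hx⟩ : ∃ s ∈ S, x ∈ f s := by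
      simpa using (hcover.symm ▸ Set.mem_univ x : x ∈ ⋃ s ∈ S, f s)
    by_cases hs' : s ∈ S'
    · exact ⟨f s, Set.mem_insert_of_mem _ ⟨s, hs', rfl⟩, hx⟩
    · have : s = a ∨ s = b := by simpa [S', hs, or_iff_not_imp_left] using hs'
      refine ⟨f a ∪ f b, Set.mem_insert _ _, ?_⟩
      rcases this with rfl | rfl
      exacts [Or.inl hx, Or.inr hx]
  · have hpair : {a, b} ⊆ S := Set.insert_subset ha (Set.singleton_subset_iff.mpr hb)
    have hS' : S'.ncard + 2 = S.ncard := by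
      rw [Set.ncard_sdiff hpair, Set.ncard_pair hab', Nat.sub_add_cancel]
      simpa [Set.ncard_pair hab'] using Set.ncard_le_ncard hpair
    calc (insert (f a ∪ f b) (f '' S')).ncard ≤ (f '' S').ncard + 1 := Set.ncard_insert_le _ _
      _ ≤ S'.ncard + 1 := by grw [Set.ncard_image_le (Set.toFinite S')]
      _ < S.ncard := by omega

theorem IsTotalForcingSet.pathCoverNumber_lt [Finite V] [Nonempty V] {S : Set V}
    (hS : G.IsTotalForcingSet S) : G.pathCoverNumber < S.ncard := by
  obtain ⟨a, ha⟩ := (hS.1 (Classical.arbitrary V)).nonempty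
  obtain ⟨b, hb, hab⟩ := hS.2 a ha
  obtain ⟨f, hf⟩ := hS.1.exists_isRootedPathCover
  obtain ⟨P, hP, hlt⟩ := hf.exists_isPathCover_ncard_lt ha hb hab
  exact hP.pathCoverNumber_le.trans_lt hlt

lemma IsAcyclic.card_edgeFinset_lt [Fintype V] [Nonempty V] [Fintype G.edgeSet]
    (hG : G.IsAcyclic) : (G.edgeFinset).card < Fintype.card V := by
  classical
  obtain ⟨T, hGT, -, hT⟩ :=
    (connected_top : (⊤ : SimpleGraph V).Connected).exists_isTree_le_of_le_of_isAcyclic le_top hG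
  rw [← hT.card_edgeFinset, Nat.lt_succ_iff]
  exact Finset.card_le_card (edgeFinset_mono hGT)

lemma IsAcyclic.card_edgeFinset_inter_sym2_lt [Fintype V] [DecidableEq V] [DecidableRel G.Adj]
    (hG : G.IsAcyclic) {X : Finset V} (hX : X.Nonempty) :
    (G.edgeFinset ∩ X.sym2).card < X.card := by
  have : Nonempty (X : Set V) := hX.to_subtype
  have h := congrArg Finset.card (map_edgeFinset_induce (s := (X : Set V)) (G := G))
  rw [Finset.card_map, Finset.toFinset_coe] at h
  rw [← h, ← Fintype.card_coe X]
  convert (hG.induce (X : Set V)).card_edgeFinset_lt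
  exact Finset.mem_coe.symm

theorem IsAcyclic.isZeroForcingSet_of_rel [Finite V] (hG : G.IsAcyclic) {S : Set V}
    (r : V → V → Prop) (hadj : ∀ ⦃u v⦄, r u v → G.Adj u v)
    (hfun : ∀ ⦃u v w⦄, r u v → r u w → v = w) (hasymm : ∀ ⦃u v⦄, r u v → ¬ r v u)
    (hcov : ∀ v ∉ S, ∃ u, r u v) : G.IsZeroForcingSet S := by
  classical
  have := Fintype.ofFinite V
  by_contra hS
  obtain ⟨v₀, hv₀⟩ : ∃ v, ¬ G.Forced S v := by simpa [IsZeroForcingSet] using hS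
  set U : Finset V := {v | ¬ G.Forced S v}
  set X : Finset V := {v | v ∈ U ∨ ∃ y ∈ U, G.Adj v y}
  have hU : ∀ {v}, v ∈ U ↔ ¬ G.Forced S v := by simp [U]
  have hX : ∀ {v}, v ∈ X ↔ v ∈ U ∨ ∃ y ∈ U, G.Adj v y := by simp [X]
  -- each `x ∈ X` is charged an edge inside `X`: the edge from its `r`-predecessor if `x ∈ U`,
  -- otherwise an edge to a neighbour in `U` that is not its `r`-successor
  let R : V → Sym2 V → Prop := fun x e =>
    (x ∈ U ∧ ∃ u, r u x ∧ e = s(u, x)) ∨ (x ∉ U ∧ ∃ y ∈ U, G.Adj x y ∧ ¬ r x y ∧ e = s(x, y))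
  have hcard : X.card ≤ (G.edgeFinset ∩ X.sym2).card := by
    refine Finset.card_le_card_of_forall_subsingleton R (fun x hx => ?_) ?_
    · by_cases hxU : x ∈ U
      · obtain ⟨u, hu⟩ := hcov x fun hxS => hU.mp hxU (.init x hxS)
        have huX : u ∈ X := hX.mpr (Or.inr ⟨x, hxU, hadj hu⟩)
        exact ⟨s(u, x), by simp [hadj hu, huX, hx], Or.inl ⟨hxU, u, hu, rfl⟩⟩
      · obtain ⟨y, hyU, hxy⟩ := (hX.mp hx).resolve_left hxU
        obtain ⟨z, hzU, hxz, hrz⟩ : ∃ z ∈ U, G.Adj x z ∧ ¬ r x z := by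
          by_cases hr : r x y
          · obtain ⟨y', hy'U, hy'y, hxy'⟩ :=
              Forced.exists_unforced_adj_ne (not_not.mp (hU.not.mp hxU)) hxy (hU.mp hyU)
            exact ⟨y', hU.mpr hy'U, hxy', fun h => hy'y (hfun h hr)⟩
          · exact ⟨y, hyU, hxy, hr⟩
        have hzX : z ∈ X := hX.mpr (Or.inl hzU)
        exact ⟨s(x, z), by simp [hxz, hx, hzX], Or.inr ⟨hxU, z, hzU, hxz, hrz, rfl⟩⟩
    · rintro e - x₁ ⟨-, h₁⟩ x₂ ⟨-, h₂⟩
      rcases h₁ with ⟨hx₁U, u₁, hu₁, rfl⟩ | ⟨hx₁U, y₁, hy₁U, -, hry₁, rfl⟩ <;>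
      rcases h₂ with ⟨hx₂U, u₂, hu₂, he⟩ | ⟨hx₂U, y₂, hy₂U, -, hry₂, he⟩ <;>
      rcases Sym2.eq_iff.mp he with ⟨h, h'⟩ | ⟨h, h'⟩ <;> subst_vars
      all_goals first | rfl | contradiction | exact (hasymm hu₁ hu₂).elim
  exact (hG.card_edgeFinset_inter_sym2_lt ⟨v₀, hX.mpr (Or.inl (hU.mpr hv₀))⟩).not_ge hcard

lemma Walk.IsPath.eq_of_mem_darts_of_fst_eq {u v : V} {p : G.Walk u v} (hp : p.IsPath)
    {d d' : G.Dart} (hd : d ∈ p.darts) (hd' : d' ∈ p.darts) (h : d.fst = d'.fst) : d = d' := by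
  refine List.inj_on_of_nodup_map (f := fun d : G.Dart => d.fst) ?_ hd hd' h
  rw [Walk.map_fst_darts]
  exact hp.support_nodup.sublist (List.dropLast_sublist _)

lemma Walk.IsTrail.symm_notMem_darts {u v : V} {p : G.Walk u v} (hp : p.IsTrail) {d : G.Dart}
    (hd : d ∈ p.darts) : d.symm ∉ p.darts := fun hd' =>
  d.symm_ne (List.inj_on_of_nodup_map hp.edges_nodup hd' hd d.edge_symm)

theorem IsAcyclic.isZeroForcingSet_of_isPathCover [Finite V] (hG : G.IsAcyclic)
    {P : Set (Set V)} {S : Set V} (hP : G.IsPathCover P)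
    (hS : ∀ Q ∈ P, ∃ s ∈ S, G.IsPathSetFrom s Q) : G.IsZeroForcingSet S := by
  choose s hsS e p hp hpQ using hS
  have hunique : ∀ ⦃Q Q'⦄ (hQ : Q ∈ P) (hQ' : Q' ∈ P) ⦃x⦄,
      x ∈ (p Q hQ).support → x ∈ (p Q' hQ').support → Q = Q' := by
    intro Q Q' hQ hQ' x hx hx'
    by_contra hne
    have hxQ : x ∈ Q := by rw [← hpQ Q hQ]; exact hx
    have hxQ' : x ∈ Q' := by rw [← hpQ Q' hQ']; exact hx'
    exact Set.disjoint_left.mp (hP.2.1 hQ hQ' hne) hxQ hxQ'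
  refine hG.isZeroForcingSet_of_rel
    (fun u v => ∃ Q, ∃ hQ : Q ∈ P, ∃ d ∈ (p Q hQ).darts, d.fst = u ∧ d.snd = v)
    ?_ ?_ ?_ ?_
  · rintro u v ⟨Q, hQ, d, -, rfl, rfl⟩
    exact d.adj
  · rintro u v w ⟨Q, hQ, d, hd, rfl, rfl⟩ ⟨Q', hQ', d', hd', hfst, rfl⟩
    obtain rfl := hunique hQ hQ' ((p Q hQ).dart_fst_mem_support_of_mem_darts hd)
      (hfst ▸ (p Q' hQ').dart_fst_mem_support_of_mem_darts hd')
    rw [(hp Q hQ).eq_of_mem_darts_of_fst_eq hd hd' hfst.symm]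
  · rintro u v ⟨Q, hQ, d, hd, rfl, rfl⟩ ⟨Q', hQ', d', hd', hfst, hsnd⟩
    obtain rfl := hunique hQ hQ' ((p Q hQ).dart_snd_mem_support_of_mem_darts hd)
      (hfst ▸ (p Q' hQ').dart_fst_mem_support_of_mem_darts hd')
    obtain rfl : d' = d.symm := Dart.ext _ _ (Prod.ext hfst hsnd)
    exact (hp Q hQ).isTrail.symm_notMem_darts hd hd'
  · intro v hv
    obtain ⟨Q, hQ, hvQ⟩ : ∃ Q ∈ P, v ∈ Q := by
      rw [← Set.mem_sUnion, hP.2.2]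
      trivial
    rw [← hpQ Q hQ, Set.mem_ofPred_eq, ← Walk.cons_tail_support, List.mem_cons] at hvQ
    obtain ⟨d, hd, rfl⟩ : ∃ d ∈ (p Q hQ).darts, d.snd = v := by
      rw [← List.mem_map, Walk.map_snd_darts]
      exact hvQ.resolve_left fun h => hv (h ▸ hsS Q hQ)
    exact ⟨d.fst, Q, hQ, d, hd, rfl, rfl⟩

theorem IsAcyclic.exists_isTotalForcingSet_ncard_le [Finite V] (hG : G.IsAcyclic)
    (hadj : ∀ v, ∃ w, G.Adj v w) {P : Set (Set V)} (hP : G.IsPathCover P) :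
    ∃ S, G.IsTotalForcingSet S ∧ S.ncard ≤ 2 * P.ncard := by
  have : ∀ Q : P, ∃ s t, G.IsPathSetFrom s Q ∧ G.Adj s t := fun Q => by
    obtain ⟨s, e, p, hp, hpQ⟩ := hP.1 Q Q.2
    obtain ⟨t, hst⟩ := hadj s
    exact ⟨s, t, ⟨e, p, hp, hpQ⟩, hst⟩
  choose s t hs hst using this
  refine ⟨Set.range s ∪ Set.range t, ⟨?_, ?_⟩, ?_⟩
  · refine (hG.isZeroForcingSet_of_isPathCover hP fun Q hQ => ?_).mono Set.subset_union_left
    exact ⟨s ⟨Q, hQ⟩, ⟨_, rfl⟩, hs ⟨Q, hQ⟩⟩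
  · rintro v (⟨Q, rfl⟩ | ⟨Q, rfl⟩)
    · exact ⟨t Q, Or.inr ⟨Q, rfl⟩, hst Q⟩
    · exact ⟨s Q, Or.inl ⟨Q, rfl⟩, (hst Q).symm⟩
  · have hrange : ∀ g : P → V, (Set.range g).ncard ≤ P.ncard := fun g => by
      rw [← Set.image_univ, ← Nat.card_coe_set_eq P, ← Set.ncard_univ]
      exact Set.ncard_image_le (Set.toFinite _)
    grw [Set.ncard_union_le, hrange s, hrange t, two_mul]

lemma exists_isPathCover [Finite V] (G : SimpleGraph V) : ∃ P, G.IsPathCover P := by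
  refine ⟨Set.range fun v => {v}, ?_, ?_, ?_⟩
  · rintro _ ⟨v, rfl⟩
    exact ⟨v, v, .nil, .nil, by simp⟩
  · rintro _ ⟨v, rfl⟩ _ ⟨w, rfl⟩ hne
    exact Set.disjoint_singleton.mpr fun h => hne (h ▸ rfl)
  · exact Set.eq_univ_of_forall fun v => ⟨{v}, ⟨v, rfl⟩, rfl⟩

lemma isTotalForcingSet_univ (hadj : ∀ v, ∃ w, G.Adj v w) : G.IsTotalForcingSet Set.univ :=
  ⟨fun v => .init v trivial, fun v _ => (hadj v).imp fun _ hw => ⟨trivial, hw⟩⟩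

theorem pathCoverNumber_lt_totalForcingNumber [Finite V] [Nonempty V]
    (hadj : ∀ v, ∃ w, G.Adj v w) : G.pathCoverNumber < G.totalForcingNumber := by
  obtain ⟨S, hS, hScard⟩ :
      G.totalForcingNumber ∈ {n | ∃ S, G.IsTotalForcingSet S ∧ S.ncard = n} :=
    Nat.sInf_mem ⟨_, _, isTotalForcingSet_univ hadj, rfl⟩
  exact hScard ▸ hS.pathCoverNumber_lt

theorem IsAcyclic.totalForcingNumber_le_two_mul [Finite V] (hG : G.IsAcyclic)
    (hadj : ∀ v, ∃ w, G.Adj v w) : G.totalForcingNumber ≤ 2 * G.pathCoverNumber := by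
  obtain ⟨P₀, hP₀⟩ := G.exists_isPathCover
  obtain ⟨P, hP, hPcard⟩ : G.pathCoverNumber ∈ {n | ∃ P, G.IsPathCover P ∧ P.ncard = n} :=
    Nat.sInf_mem ⟨_, P₀, hP₀, rfl⟩
  obtain ⟨S, hS, hScard⟩ := hG.exists_isTotalForcingSet_ncard_le hadj hP
  exact hS.totalForcingNumber_le.trans (hPcard ▸ hScard)

end SimpleGraph

theorem stmt10 {V : Type*} [Fintype V] (T : SimpleGraph V) (hT : T.IsTree)
    (hn : 2 ≤ Fintype.card V) :
    T.pathCoverNumber + 1 ≤ T.totalForcingNumber ∧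
      T.totalForcingNumber ≤ 2 * T.pathCoverNumber := by
  have : Nontrivial V := Fintype.one_lt_card_iff_nontrivial.mp hn
  have hadj := hT.connected.preconnected.exists_adj_of_nontrivial
  exact ⟨T.pathCoverNumber_lt_totalForcingNumber hadj,
    hT.isAcyclic.totalForcingNumber_le_two_mul hadj⟩
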